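/- arXiv:1510.02808 — 2 statements merged into one kernel-verified Lean document; each statement's English description precedes it below -/
import Mathlib

section
/- Suppose the market weight sequence {μ(t)} satisfies Assumption (M), takes values in a finite set E ⊂ Δ_n, and the empirical measures ℙ_t converge weakly to a probability measure ℙ on E × E. Let Θ = (Δ̄_n)^E with the topology of pointwise convergence and let ν_0 be an initial distribution on Θ with full support. Then the wealth distributions {ν_t}_{t=0}^∞ satisfy the large deviation principle on Θ with the convex rate function I(π) = W* − W(π), where W(π) = ∫_{E×E} ℓ_π dℙ and W* = max_{π∈Θ} W(π). -/
/-!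
Along the market path, `log V_π(t) = ∑_{s<t} ℓ_π(μ(s), μ(s+1)) = t ∫ ℓ_π dℙ_t`. Since `E` is
finite, `ℓ_π` is continuous on the compact space `Θ × E × E` and hence bounded uniformly in `π`,
so `(1/t) log V_π(t) → W(π)` uniformly in `π`. The wealth distribution `ν_t` therefore has
density `exp (t (W + o(1)))` with respect to `ν₀`, and a Laplace-type argument gives the large
deviation principle: the mass of `B` is at most `exp (t (sup_B W + ε))`, while the normalising
constant is at least `ν₀ {W > W* - ε} · exp (t (W* - 2ε))`, where `ν₀ {W > W* - ε} > 0` because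
`ν₀` has full support; the lower bound for open sets is symmetric. Convexity of `I` is concavity
of `log`, since `exp ℓ_π(p, q)` is linear in `π`.
-/

open scoped Classical

open MeasureTheory Filter Topology Finset
open scoped ENNReal

noncomputable section

/-- The open unit simplex in `ℝⁿ`. -/
def oS (n : ℕ) : Set (Fin n → ℝ) := {p | (∀ i, 0 < p i) ∧ ∑ i, p i = 1}

/-- The closed unit simplex in `ℝⁿ`. -/
def cS (n : ℕ) : Set (Fin n → ℝ) := {p | (∀ i, 0 ≤ p i) ∧ ∑ i, p i = 1}

/-- Relative value of a (time-dependent) weight sequence `w` along market path `μ`. -/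
def relV {n : ℕ} (μ w : ℕ → Fin n → ℝ) : ℕ → ℝ
  | 0 => 1
  | t + 1 => relV μ w t * ∑ i, w t i * (μ (t + 1) i / μ t i)

/-- Assumption (M): relative returns bounded between `1/M` and `M`. -/
def AssumptionM {n : ℕ} (M : ℝ) (μ : ℕ → ↥(oS n)) : Prop :=
  ∀ t i, 1 / M ≤ (μ (t + 1) : Fin n → ℝ) i / (μ t : Fin n → ℝ) i ∧
    (μ (t + 1) : Fin n → ℝ) i / (μ t : Fin n → ℝ) i ≤ M

/-- Relative value of a portfolio map defined on a finite state space `E`. -/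
def pVE {n : ℕ} {E : Finset (Fin n → ℝ)} (μ : ℕ → ↥(oS n))
    (hr : ∀ t, (μ t : Fin n → ℝ) ∈ E) (π : ↥E → ↥(cS n)) : ℕ → ℝ :=
  relV (fun t => (μ t : Fin n → ℝ))
    (fun t => (π ⟨(μ t : Fin n → ℝ), hr t⟩ : Fin n → ℝ))

/-- `ℓ_π(p,q) = log( Σ_i π_i(p) q_i/p_i )` for a portfolio map on `E`. -/
def lE {n : ℕ} {E : Finset (Fin n → ℝ)} (π : ↥E → ↥(cS n)) (p q : ↥E) : ℝ :=
  Real.log (∑ i, (π p : Fin n → ℝ) i * ((q : Fin n → ℝ) i / (p : Fin n → ℝ) i))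

/-- Normalized wealth distribution `ν_t(B) = (∫_B V dν₀)/(∫ V dν₀)`. -/
def wd {T : Type*} [MeasurableSpace T] (ν0 : Measure T) (V : T → ℝ) : Measure T :=
  (ν0.withDensity (fun x => ENNReal.ofReal (V x)) Set.univ)⁻¹ •
    ν0.withDensity fun x => ENNReal.ofReal (V x)

section WealthDistribution

variable {T : Type*} [MeasurableSpace T] {ν0 : Measure T}

lemma wd_apply {V : T → ℝ} {B : Set T} (hB : MeasurableSet B) :
    wd ν0 V B = (∫⁻ x, ENNReal.ofReal (V x) ∂ν0)⁻¹ * ∫⁻ x in B, ENNReal.ofReal (V x) ∂ν0 := by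
  simp only [wd, Measure.smul_apply, smul_eq_mul, withDensity_apply _ hB,
    withDensity_apply _ MeasurableSet.univ, Measure.restrict_univ]

lemma wd_le_ofReal {V : T → ℝ} {B : Set T} (hB : MeasurableSet B) {a b : ℝ} (ha : 0 < a)
    (hden : ENNReal.ofReal a ≤ ∫⁻ x, ENNReal.ofReal (V x) ∂ν0)
    (hnum : ∫⁻ x in B, ENNReal.ofReal (V x) ∂ν0 ≤ ENNReal.ofReal b) :
    wd ν0 V B ≤ ENNReal.ofReal (a⁻¹ * b) := by
  rw [wd_apply hB, ENNReal.ofReal_mul (inv_nonneg.2 ha.le), ENNReal.ofReal_inv_of_pos ha]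
  gcongr

lemma ofReal_le_wd {V : T → ℝ} {B : Set T} (hB : MeasurableSet B) {a b : ℝ} (ha : 0 < a)
    (hden : ∫⁻ x, ENNReal.ofReal (V x) ∂ν0 ≤ ENNReal.ofReal a)
    (hnum : ENNReal.ofReal b ≤ ∫⁻ x in B, ENNReal.ofReal (V x) ∂ν0) :
    ENNReal.ofReal (a⁻¹ * b) ≤ wd ν0 V B := by
  rw [wd_apply hB, ENNReal.ofReal_mul (inv_nonneg.2 ha.le), ENNReal.ofReal_inv_of_pos ha]
  gcongr

lemma setLIntegral_ofReal_le [IsProbabilityMeasure ν0] {B : Set T} (hB : MeasurableSet B)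
    {f : T → ℝ} {b : ℝ} (h : ∀ x ∈ B, f x ≤ b) :
    ∫⁻ x in B, ENNReal.ofReal (f x) ∂ν0 ≤ ENNReal.ofReal b :=
  calc ∫⁻ x in B, ENNReal.ofReal (f x) ∂ν0 ≤ ∫⁻ _ in B, ENNReal.ofReal b ∂ν0 :=
        setLIntegral_mono' hB fun x hx => ENNReal.ofReal_le_ofReal (h x hx)
    _ = ENNReal.ofReal b * ν0 B := setLIntegral_const B _
    _ ≤ ENNReal.ofReal b := mul_le_of_le_one_right' prob_le_one

lemma ofReal_mul_toReal_le_setLIntegral [IsFiniteMeasure ν0] {B : Set T} (hB : MeasurableSet B)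
    {f : T → ℝ} {a : ℝ} (ha : 0 ≤ a) (h : ∀ x ∈ B, a ≤ f x) :
    ENNReal.ofReal (a * (ν0 B).toReal) ≤ ∫⁻ x in B, ENNReal.ofReal (f x) ∂ν0 :=
  calc ENNReal.ofReal (a * (ν0 B).toReal) = ∫⁻ _ in B, ENNReal.ofReal a ∂ν0 := by
        rw [setLIntegral_const, ENNReal.ofReal_mul ha,
          ENNReal.ofReal_toReal (measure_ne_top _ _)]
    _ ≤ ∫⁻ x in B, ENNReal.ofReal (f x) ∂ν0 :=
        setLIntegral_mono' hB fun x hx => ENNReal.ofReal_le_ofReal (h x hx)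

end WealthDistribution

section LaplacePrinciple

open Real

lemma tendsto_inv_mul_log_mul_exp {K : ℝ} (hK : 0 < K) (c : ℝ) :
    Tendsto (fun t : ℕ => (((t : ℝ)⁻¹ * log (K * exp (t * c)) : ℝ) : EReal)) atTop (𝓝 c) := by
  have h := (tendsto_const_div_atTop_nhds_zero_nat (log K)).add_const c
  rw [zero_add] at h
  refine EReal.tendsto_coe.2 (h.congr' ?_)
  filter_upwards [eventually_ne_atTop 0] with t ht
  rw [log_mul hK.ne' (exp_pos _).ne', log_exp]
  field_simp

lemma log_ofReal_mul_exp {K : ℝ} (hK : 0 < K) (x : ℝ) :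
    ENNReal.log (ENNReal.ofReal (K * exp x)) = ((log (K * exp x) : ℝ) : EReal) :=
  ENNReal.log_ofReal_of_pos (by positivity)

lemma limsup_inv_mul_log_le {m : ℕ → ℝ≥0∞} {K c : ℝ} (hK : 0 < K)
    (h : ∀ᶠ t : ℕ in atTop, m t ≤ ENNReal.ofReal (K * exp (t * c))) :
    limsup (fun t : ℕ => (((t : ℝ)⁻¹ : ℝ) : EReal) * ENNReal.log (m t)) atTop ≤ c := by
  refine (limsup_le_limsup ?_).trans_eq (tendsto_inv_mul_log_mul_exp hK c).limsup_eq
  filter_upwards [h] with t ht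
  rw [EReal.coe_mul, ← log_ofReal_mul_exp hK]
  exact mul_le_mul_of_nonneg_left (ENNReal.log_le_log ht)
    (by exact_mod_cast inv_nonneg.2 t.cast_nonneg)

lemma le_liminf_inv_mul_log {m : ℕ → ℝ≥0∞} {K c : ℝ} (hK : 0 < K)
    (h : ∀ᶠ t : ℕ in atTop, ENNReal.ofReal (K * exp (t * c)) ≤ m t) :
    (c : EReal) ≤ liminf (fun t : ℕ => (((t : ℝ)⁻¹ : ℝ) : EReal) * ENNReal.log (m t)) atTop := by
  refine (tendsto_inv_mul_log_mul_exp hK c).liminf_eq.symm.trans_le (liminf_le_liminf ?_)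
  filter_upwards [h] with t ht
  rw [EReal.coe_mul, ← log_ofReal_mul_exp hK]
  exact mul_le_mul_of_nonneg_left (ENNReal.log_le_log ht)
    (by exact_mod_cast inv_nonneg.2 t.cast_nonneg)

variable {Θ : Type*} {V : ℕ → Θ → ℝ} {W : Θ → ℝ}

lemma eventually_exp_le_and_le_exp (hV : ∀ t θ, 0 < V t θ)
    (hconv : TendstoUniformly (fun (t : ℕ) θ => (t : ℝ)⁻¹ * log (V t θ)) W atTop)
    {ε : ℝ} (hε : 0 < ε) :
    ∀ᶠ t : ℕ in atTop, ∀ θ, exp (t * (W θ - ε)) ≤ V t θ ∧ V t θ ≤ exp (t * (W θ + ε)) := by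
  filter_upwards [Metric.tendstoUniformly_iff.1 hconv ε hε, eventually_gt_atTop 0]
    with t ht ht0 θ
  have htpos : (0 : ℝ) < t := Nat.cast_pos.2 ht0
  have hdist := ht θ
  rw [Real.dist_eq, abs_lt] at hdist
  have hlog : log (V t θ) = t * ((t : ℝ)⁻¹ * log (V t θ)) := by field_simp
  rw [← le_log_iff_exp_le (hV t θ), ← log_le_iff_le_exp (hV t θ), hlog]
  exact ⟨mul_le_mul_of_nonneg_left (by linarith) htpos.le,
    mul_le_mul_of_nonneg_left (by linarith) htpos.le⟩

variable [TopologicalSpace Θ] [MeasurableSpace Θ] [OpensMeasurableSpace Θ]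
  {ν0 : Measure Θ} [IsProbabilityMeasure ν0]
  (hsupp : ∀ U : Set Θ, IsOpen U → U.Nonempty → 0 < ν0 U) (hV : ∀ t θ, 0 < V t θ)
  (hconv : TendstoUniformly (fun (t : ℕ) θ => (t : ℝ)⁻¹ * log (V t θ)) W atTop)
  (hW : Continuous W)
include hsupp hV hconv hW

lemma limsup_log_wd_le [Nonempty Θ] {B : Set Θ} (hB : MeasurableSet B) {L : ℝ}
    (hL : ∀ θ ∈ B, W θ ≤ L) :
    limsup (fun t : ℕ => (((t : ℝ)⁻¹ : ℝ) : EReal) * ENNReal.log (wd ν0 (V t) B)) atTop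
      ≤ ((L - ⨆ θ, W θ : ℝ) : EReal) := by
  refine EReal.le_of_forall_lt_iff_le.1 fun c hc => ?_
  set Ws := ⨆ θ, W θ
  set ε := (c - (L - Ws)) / 3
  have hε : 0 < ε := by have := EReal.coe_lt_coe_iff.1 hc; simp only [ε]; linarith
  set U := W ⁻¹' Set.Ioi (Ws - ε)
  have hUo : IsOpen U := isOpen_Ioi.preimage hW
  have hU : 0 < ν0 U := hsupp U hUo (exists_lt_of_lt_ciSup (sub_lt_self Ws hε))
  set K := (ν0 U).toReal
  have hK : 0 < K := ENNReal.toReal_pos hU.ne' (measure_ne_top _ _)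
  rw [show c = L - Ws + 3 * ε by simp only [ε]; ring]
  refine limsup_inv_mul_log_le (inv_pos.2 hK) ?_
  filter_upwards [eventually_exp_le_and_le_exp hV hconv hε] with t ht
  have htnn : (0 : ℝ) ≤ t := t.cast_nonneg
  have hden : ENNReal.ofReal (exp (t * (Ws - 2 * ε)) * K) ≤ ∫⁻ θ, ENNReal.ofReal (V t θ) ∂ν0 :=
    (ofReal_mul_toReal_le_setLIntegral hUo.measurableSet (exp_pos _).le fun θ (hθ : Ws - ε < W θ) =>
      (exp_le_exp.2 (by nlinarith)).trans (ht θ).1).trans (setLIntegral_le_lintegral _ _)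
  have hnum : ∫⁻ θ in B, ENNReal.ofReal (V t θ) ∂ν0 ≤ ENNReal.ofReal (exp (t * (L + ε))) :=
    setLIntegral_ofReal_le hB fun θ hθ =>
      (ht θ).2.trans (exp_le_exp.2 (by have := hL θ hθ; nlinarith))
  refine (wd_le_ofReal hB (by positivity) hden hnum).trans_eq ?_
  rw [show t * (L - Ws + 3 * ε) = t * (L + ε) - t * (Ws - 2 * ε) by ring, exp_sub]
  congr 1
  field_simp

lemma le_liminf_log_wd (hWbdd : BddAbove (Set.range W)) {G : Set Θ} (hG : IsOpen G)
    {θ₀ : Θ} (hθ₀ : θ₀ ∈ G) :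
    ((W θ₀ - ⨆ θ, W θ : ℝ) : EReal) ≤
      liminf (fun t : ℕ => (((t : ℝ)⁻¹ : ℝ) : EReal) * ENNReal.log (wd ν0 (V t) G)) atTop := by
  refine EReal.ge_of_forall_gt_iff_ge.1 fun c hc => ?_
  set Ws := ⨆ θ, W θ
  set ε := (W θ₀ - Ws - c) / 3
  have hε : 0 < ε := by have := EReal.coe_lt_coe_iff.1 hc; simp only [ε]; linarith
  set U := G ∩ W ⁻¹' Set.Ioi (W θ₀ - ε)
  have hUo : IsOpen U := hG.inter (isOpen_Ioi.preimage hW)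
  have hU : 0 < ν0 U := hsupp U hUo ⟨θ₀, hθ₀, sub_lt_self _ hε⟩
  set K := (ν0 U).toReal
  have hK : 0 < K := ENNReal.toReal_pos hU.ne' (measure_ne_top _ _)
  rw [show c = W θ₀ - Ws - 3 * ε by simp only [ε]; ring]
  refine le_liminf_inv_mul_log hK ?_
  filter_upwards [eventually_exp_le_and_le_exp hV hconv hε] with t ht
  have htnn : (0 : ℝ) ≤ t := t.cast_nonneg
  have hden : ∫⁻ θ, ENNReal.ofReal (V t θ) ∂ν0 ≤ ENNReal.ofReal (exp (t * (Ws + ε))) := by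
    simpa using setLIntegral_ofReal_le MeasurableSet.univ fun θ _ =>
      (ht θ).2.trans (exp_le_exp.2 (by have := le_ciSup hWbdd θ; nlinarith))
  have hnum : ENNReal.ofReal (exp (t * (W θ₀ - 2 * ε)) * K) ≤
      ∫⁻ θ in G, ENNReal.ofReal (V t θ) ∂ν0 :=
    (ofReal_mul_toReal_le_setLIntegral hUo.measurableSet (exp_pos _).le fun θ hθ =>
      (exp_le_exp.2 (by have : W θ₀ - ε < W θ := hθ.2; nlinarith)).trans (ht θ).1).trans
      (lintegral_mono_set Set.inter_subset_left)
  refine le_trans (le_of_eq ?_) (ofReal_le_wd hG.measurableSet (exp_pos _) hden hnum)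
  rw [show t * (W θ₀ - Ws - 3 * ε) = t * (W θ₀ - 2 * ε) - t * (Ws + ε) by ring, exp_sub]
  congr 1
  field_simp

theorem limsup_log_wd_le_neg_iInf [Nonempty Θ] {F : Set Θ} (hF : MeasurableSet F) :
    limsup (fun t : ℕ => (((t : ℝ)⁻¹ : ℝ) : EReal) * ENNReal.log (wd ν0 (V t) F)) atTop
      ≤ -(⨅ θ ∈ F, (((⨆ η, W η) - W θ : ℝ) : EReal)) := by
  refine EReal.le_of_forall_lt_iff_le.1 fun c hc => ?_
  have hFW : ∀ θ ∈ F, W θ ≤ (⨆ η, W η) + c := by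
    intro θ hθ
    have h := (EReal.neg_lt_comm.1 hc).trans_le (iInf₂_le θ hθ)
    rw [← EReal.coe_neg, EReal.coe_lt_coe_iff] at h
    linarith
  simpa using limsup_log_wd_le hsupp hV hconv hW hF hFW

theorem neg_iInf_le_liminf_log_wd (hWbdd : BddAbove (Set.range W)) {G : Set Θ} (hG : IsOpen G) :
    -(⨅ θ ∈ G, (((⨆ η, W η) - W θ : ℝ) : EReal)) ≤
      liminf (fun t : ℕ => (((t : ℝ)⁻¹ : ℝ) : EReal) * ENNReal.log (wd ν0 (V t) G)) atTop := by
  rw [EReal.neg_le]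
  refine le_iInf₂ fun θ hθ => ?_
  rw [EReal.neg_le, ← EReal.coe_neg, neg_sub]
  exact le_liminf_log_wd hsupp hV hconv hW hWbdd hG hθ

end LaplacePrinciple

section Market

variable {n : ℕ}

lemma cS_eq_stdSimplex (n : ℕ) : cS n = stdSimplex ℝ (Fin n) := rfl

instance (n : ℕ) : CompactSpace ↥(cS n) :=
  isCompact_iff_compactSpace.1 (cS_eq_stdSimplex n ▸ isCompact_stdSimplex ℝ (Fin n))

lemma oS_subset_cS (n : ℕ) : oS n ⊆ cS n := fun _ hp => ⟨fun i => (hp.1 i).le, hp.2⟩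

lemma sum_mul_pos_of_mem_stdSimplex {ι : Type*} [Fintype ι] {w r : ι → ℝ}
    (hw : w ∈ stdSimplex ℝ ι) (hr : ∀ i, 0 < r i) : 0 < ∑ i, w i * r i := by
  obtain ⟨i, -, hi⟩ : ∃ i ∈ univ, (0 : ι → ℝ) i < w i :=
    exists_lt_of_sum_lt (by simp [hw.2])
  exact sum_pos' (fun j _ => mul_nonneg (hw.1 j) (hr j).le) ⟨i, mem_univ i, mul_pos hi (hr i)⟩

lemma relV_eq_prod (μ w : ℕ → Fin n → ℝ) (t : ℕ) :
    relV μ w t = ∏ s ∈ range t, ∑ i, w s i * (μ (s + 1) i / μ s i) := by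
  induction t with
  | zero => rfl
  | succ t ih => rw [prod_range_succ, ← ih]; rfl

lemma sum_range_comp_eq_sum_count {β : Type*} [Fintype β] (xs : ℕ → β) (f : β → ℝ) (t : ℕ) :
    ∑ s ∈ range t, f (xs s) =
      ∑ x, (∑ s ∈ range t, if xs s = x then (1 : ℝ) else 0) * f x := by
  simp_rw [sum_mul, boole_mul]
  rw [sum_comm]
  simp

lemma tendstoUniformly_sum_mul {β ι : Type*} [Fintype β] {a : ℕ → β → ℝ} {P : β → ℝ}
    (ha : ∀ x, Tendsto (fun t => a t x) atTop (𝓝 (P x))) {g : ι → β → ℝ} {C : ℝ}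
    (hg : ∀ i x, |g i x| ≤ C) :
    TendstoUniformly (fun t i => ∑ x, a t x * g i x) (fun i => ∑ x, P x * g i x) atTop := by
  have hlim : Tendsto (fun t => ∑ x, |a t x - P x| * C) atTop (𝓝 0) := by
    simpa using tendsto_finsetSum univ fun x _ => ((ha x).sub_const (P x)).abs.mul_const C
  refine Metric.tendstoUniformly_iff.2 fun ε hε => ?_
  filter_upwards [(tendsto_order.1 hlim).2 ε hε] with t ht i
  refine lt_of_le_of_lt ?_ ht
  rw [Real.dist_eq, ← sum_sub_distrib]
  refine (abs_sum_le_sum_abs _ _).trans (sum_le_sum fun x _ => ?_)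
  rw [← sub_mul, abs_mul, abs_sub_comm]
  exact mul_le_mul_of_nonneg_left (hg i x) (abs_nonneg _)

variable {E : Finset (Fin n → ℝ)}

def relReturn (π : ↥E → ↥(cS n)) (p q : ↥E) : ℝ :=
  ∑ i, (π p : Fin n → ℝ) i * ((q : Fin n → ℝ) i / (p : Fin n → ℝ) i)

lemma lE_eq_log_relReturn (π : ↥E → ↥(cS n)) (p q : ↥E) :
    lE π p q = Real.log (relReturn π p q) := rfl

lemma relReturn_pos (hE : ∀ p ∈ E, p ∈ oS n) (π : ↥E → ↥(cS n)) (p q : ↥E) :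
    0 < relReturn π p q :=
  sum_mul_pos_of_mem_stdSimplex (π p).2 fun i => div_pos ((hE q q.2).1 i) ((hE p p.2).1 i)

lemma continuous_relReturn (p q : ↥E) :
    Continuous fun π : ↥E → ↥(cS n) => relReturn π p q := by
  refine continuous_finsetSum _ fun i _ => Continuous.mul ?_ continuous_const
  exact (continuous_apply i).comp (continuous_subtype_val.comp (continuous_apply p))

lemma continuous_lE (hE : ∀ p ∈ E, p ∈ oS n) (p q : ↥E) :
    Continuous fun π : ↥E → ↥(cS n) => lE π p q :=
  (continuous_relReturn p q).log fun π => (relReturn_pos hE π p q).ne'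

lemma exists_abs_lE_le (hE : ∀ p ∈ E, p ∈ oS n) :
    ∃ C, ∀ (π : ↥E → ↥(cS n)) (x : ↥E × ↥E), |lE π x.1 x.2| ≤ C := by
  have hcont : Continuous fun y : (↥E → ↥(cS n)) × (↥E × ↥E) => lE y.1 y.2.1 y.2.2 :=
    continuous_prod_of_discrete_right.2 fun x => continuous_lE hE x.1 x.2
  obtain ⟨C, hC⟩ := isCompact_univ.exists_bound_of_continuousOn hcont.continuousOn
  exact ⟨C, fun π x => hC (π, x) trivial⟩

lemma mul_lE_add_mul_lE_le (hE : ∀ p ∈ E, p ∈ oS n) {π η ψ : ↥E → ↥(cS n)} {a b : ℝ}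
    (ha : 0 ≤ a) (hb : 0 ≤ b) (hab : a + b = 1)
    (hψ : ∀ p : ↥E, (ψ p : Fin n → ℝ) = a • (π p : Fin n → ℝ) + b • (η p : Fin n → ℝ))
    (p q : ↥E) : a * lE π p q + b * lE η p q ≤ lE ψ p q := by
  have hψq : relReturn ψ p q = a * relReturn π p q + b * relReturn η p q := by
    simp only [relReturn, hψ, mul_sum, ← sum_add_distrib, Pi.add_apply, Pi.smul_apply,
      smul_eq_mul]
    exact sum_congr rfl fun i _ => by ring
  have := strictConcaveOn_log_Ioi.concaveOn.2 (relReturn_pos hE π p q)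
    (relReturn_pos hE η p q) ha hb hab
  simpa only [lE_eq_log_relReturn, smul_eq_mul, hψq] using this

variable {μ : ℕ → ↥(oS n)} {hr : ∀ t, (μ t : Fin n → ℝ) ∈ E}

lemma pVE_eq_prod (π : ↥E → ↥(cS n)) (t : ℕ) :
    pVE μ hr π t = ∏ s ∈ range t, relReturn π ⟨μ s, hr s⟩ ⟨μ (s + 1), hr (s + 1)⟩ :=
  relV_eq_prod _ _ t

lemma pVE_pos (hE : ∀ p ∈ E, p ∈ oS n) (π : ↥E → ↥(cS n)) (t : ℕ) : 0 < pVE μ hr π t := by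
  rw [pVE_eq_prod]
  exact prod_pos fun s _ => relReturn_pos hE π _ _

lemma log_pVE (hE : ∀ p ∈ E, p ∈ oS n) (π : ↥E → ↥(cS n)) (t : ℕ) :
    Real.log (pVE μ hr π t) = ∑ s ∈ range t, lE π ⟨μ s, hr s⟩ ⟨μ (s + 1), hr (s + 1)⟩ := by
  rw [pVE_eq_prod, Real.log_prod fun s _ => (relReturn_pos hE π _ _).ne']
  rfl

lemma tendstoUniformly_log_pVE (hE : ∀ p ∈ E, p ∈ oS n) {P : ↥E × ↥E → ℝ}
    (hweak : ∀ x : ↥E × ↥E,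
      Tendsto (fun t : ℕ =>
          (∑ s ∈ Finset.range t,
            if (⟨(μ s : Fin n → ℝ), hr s⟩ : ↥E) = x.1 ∧
               (⟨(μ (s + 1) : Fin n → ℝ), hr (s + 1)⟩ : ↥E) = x.2 then (1 : ℝ) else 0) / t)
        atTop (𝓝 (P x))) :
    TendstoUniformly (fun (t : ℕ) π => (t : ℝ)⁻¹ * Real.log (pVE μ hr π t))
      (fun π => ∑ x : ↥E × ↥E, P x * lE π x.1 x.2) atTop := by
  obtain ⟨C, hC⟩ := exists_abs_lE_le hE
  convert tendstoUniformly_sum_mul hweak (g := fun π x => lE π x.1 x.2) hC using 1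
  funext t π
  rw [log_pVE hE, sum_range_comp_eq_sum_count
    (fun s => ((⟨μ s, hr s⟩ : ↥E), (⟨μ (s + 1), hr (s + 1)⟩ : ↥E))) (fun x => lE π x.1 x.2),
    mul_sum]
  refine sum_congr rfl fun x _ => ?_
  simp only [Prod.ext_iff]
  ring

end Market

theorem stmt8_general {n : ℕ}
    (E : Finset (Fin n → ℝ)) (hE : ∀ p ∈ E, p ∈ oS n)
    (μ : ℕ → ↥(oS n)) (hr : ∀ t, (μ t : Fin n → ℝ) ∈ E)
    (P : ↥E × ↥E → ℝ) (hP0 : ∀ x, 0 ≤ P x)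
    (hweak : ∀ x : ↥E × ↥E,
      Tendsto (fun t : ℕ =>
          (∑ s ∈ Finset.range t,
            if (⟨(μ s : Fin n → ℝ), hr s⟩ : ↥E) = x.1 ∧
               (⟨(μ (s + 1) : Fin n → ℝ), hr (s + 1)⟩ : ↥E) = x.2 then (1 : ℝ) else 0) / t)
        atTop (𝓝 (P x)))
    (ν0 : Measure (↥E → ↥(cS n))) [IsProbabilityMeasure ν0]
    (hsupp : ∀ U : Set (↥E → ↥(cS n)), IsOpen U → U.Nonempty → 0 < ν0 U)
    (W : (↥E → ↥(cS n)) → ℝ) (hWdef : ∀ π, W π = ∑ x : ↥E × ↥E, P x * lE π x.1 x.2)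
    (I : (↥E → ↥(cS n)) → ℝ) (hIdef : ∀ π, I π = (⨆ η : ↥E → ↥(cS n), W η) - W π) :
    (∀ F : Set (↥E → ↥(cS n)), IsClosed F →
      limsup (fun t : ℕ =>
          (((t : ℝ)⁻¹ : ℝ) : EReal) *
            ENNReal.log (wd ν0 (fun π => pVE μ hr π t) F)) atTop
        ≤ -(⨅ π ∈ F, ((I π : ℝ) : EReal))) ∧
    (∀ G : Set (↥E → ↥(cS n)), IsOpen G →
      -(⨅ π ∈ G, ((I π : ℝ) : EReal)) ≤
        liminf (fun t : ℕ =>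
          (((t : ℝ)⁻¹ : ℝ) : EReal) *
            ENNReal.log (wd ν0 (fun π => pVE μ hr π t) G)) atTop) ∧
    (∀ π η : ↥E → ↥(cS n), ∀ a b : ℝ, 0 ≤ a → 0 ≤ b → a + b = 1 →
      ∀ ψ : ↥E → ↥(cS n),
        (∀ p : ↥E, (ψ p : Fin n → ℝ) = a • (π p : Fin n → ℝ) + b • (η p : Fin n → ℝ)) →
        I ψ ≤ a * I π + b * I η) := by
  have : Nonempty (↥E → ↥(cS n)) := ⟨fun _ => ⟨μ 0, oS_subset_cS n (μ 0).2⟩⟩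
  obtain rfl : I = fun π => (⨆ η, W η) - W π := funext hIdef
  have hWeq : W = fun π => ∑ x : ↥E × ↥E, P x * lE π x.1 x.2 := funext hWdef
  have hW : Continuous W :=
    hWeq ▸ continuous_finsetSum _ fun x _ => continuous_const.mul (continuous_lE hE x.1 x.2)
  have hconv := hWeq ▸ tendstoUniformly_log_pVE hE hweak
  have hV : ∀ t π, 0 < pVE μ hr π t := fun t π => pVE_pos hE π t
  refine ⟨fun F hF => limsup_log_wd_le_neg_iInf hsupp hV hconv hW hF.measurableSet,
    fun G hG => neg_iInf_le_liminf_log_wd hsupp hV hconv hW (isCompact_range hW).bddAbove hG,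
    fun π η a b ha hb hab ψ hψ => ?_⟩
  have hWψ : a * W π + b * W η ≤ W ψ := by
    simp only [hWdef, mul_sum, ← sum_add_distrib]
    exact sum_le_sum fun x _ => by nlinarith [mul_lE_add_mul_lE_le hE ha hb hab hψ x.1 x.2, hP0 x]
  have hWs : a * (⨆ η, W η) + b * (⨆ η, W η) = ⨆ η, W η := by rw [← add_mul, hab, one_mul]
  dsimp only
  linarith

/-- Theorem 3.3(ii): finite state space LDP for the wealth distributions,
with the convex rate function `I(π) = W* − W(π)`, `W(π) = ∫ ℓ_π dℙ`. -/
theorem stmt8 {n : ℕ} (hn : 2 ≤ n) (M : ℝ) (hM : 0 < M)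
    (E : Finset (Fin n → ℝ)) (hE : ∀ p ∈ E, p ∈ oS n)
    (μ : ℕ → ↥(oS n)) (hAM : AssumptionM M μ) (hr : ∀ t, (μ t : Fin n → ℝ) ∈ E)
    (P : ↥E × ↥E → ℝ) (hP0 : ∀ x, 0 ≤ P x) (hP1 : ∑ x : ↥E × ↥E, P x = 1)
    (hweak : ∀ x : ↥E × ↥E,
      Tendsto (fun t : ℕ =>
          (∑ s ∈ Finset.range t,
            if (⟨(μ s : Fin n → ℝ), hr s⟩ : ↥E) = x.1 ∧
               (⟨(μ (s + 1) : Fin n → ℝ), hr (s + 1)⟩ : ↥E) = x.2 then (1 : ℝ) else 0) / t)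
        atTop (𝓝 (P x)))
    (ν0 : Measure (↥E → ↥(cS n))) [IsProbabilityMeasure ν0]
    (hsupp : ∀ U : Set (↥E → ↥(cS n)), IsOpen U → U.Nonempty → 0 < ν0 U)
    (W : (↥E → ↥(cS n)) → ℝ) (hWdef : ∀ π, W π = ∑ x : ↥E × ↥E, P x * lE π x.1 x.2)
    (I : (↥E → ↥(cS n)) → ℝ) (hIdef : ∀ π, I π = (⨆ η : ↥E → ↥(cS n), W η) - W π) :
    (∀ F : Set (↥E → ↥(cS n)), IsClosed F →
      limsup (fun t : ℕ =>
          (((t : ℝ)⁻¹ : ℝ) : EReal) *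
            ENNReal.log (wd ν0 (fun π => pVE μ hr π t) F)) atTop
        ≤ -(⨅ π ∈ F, ((I π : ℝ) : EReal))) ∧
    (∀ G : Set (↥E → ↥(cS n)), IsOpen G →
      -(⨅ π ∈ G, ((I π : ℝ) : EReal)) ≤
        liminf (fun t : ℕ =>
          (((t : ℝ)⁻¹ : ℝ) : EReal) *
            ENNReal.log (wd ν0 (fun π => pVE μ hr π t) G)) atTop) ∧
    (∀ π η : ↥E → ↥(cS n), ∀ a b : ℝ, 0 ≤ a → 0 ≤ b → a + b = 1 →
      ∀ ψ : ↥E → ↥(cS n),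
        (∀ p : ↥E, (ψ p : Fin n → ℝ) = a • (π p : Fin n → ℝ) + b • (η p : Fin n → ℝ)) →
        I ψ ≤ a * I π + b * I η) :=
  stmt8_general E hE μ hr P hP0 hweak ν0 hsupp W hWdef I hIdef
end
end

section
/- Suppose the market weight sequence {μ(t)} ⊂ Δ_n satisfies Assumption (M). Let Θ be a totally bounded subset of L^∞(Δ_n, Δ̄_n) (portfolio maps with the supremum metric), jointly measurable, and let ν_0 be an initial distribution on Θ with full support. Then Cover's portfolio π̂(t) = ∫_Θ π(μ(t)) dν_t(π) satisfies the universality property lim_{t→∞} (1/t) log ( V̂(t)/V*(t) ) = 0, where V̂(t) = ∫_Θ V_π(t) dν_0(π) and V*(t) = sup_{π ∈ Θ} V_π(t). -/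
/-!
Under Assumption (M) one trading step multiplies wealth by a factor `S ∈ [1/M, M]`, and moving the
portfolio by `ε` in supremum distance lowers `S` by at most `n M ε ≤ n M² ε S`. Hence the wealths
of `ε`-close portfolio maps differ at most by the factor `ρ^t`, `ρ = 1 - n M² ε`. Total boundedness
and full support give one `c > 0` such that every `π ∈ Θ` has a set of `ν₀`-mass at least `c` of
maps `ε`-close to it; integrating over it, `V̂(t) ≥ c ρ^t V_π(t)` for every `π`. So
`c ρ^t ≤ V̂(t)/V*(t) ≤ 1`, and `ρ < 1` is arbitrary.
-/

open MeasureTheory Filter Topology Finset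
open scoped UniformConvergence ENNReal Uniformity

noncomputable section

/-- Relative value of a portfolio map. -/
def pV {n : ℕ} (μ : ℕ → ↥(oS n)) (π : ↥(oS n) → ↥(cS n)) : ℕ → ℝ :=
  relV (fun t => (μ t : Fin n → ℝ)) (fun t => (π (μ t) : Fin n → ℝ))

/-- Portfolio maps `Δₙ → Δ̄ₙ` with the topology (uniformity) of uniform convergence,
i.e. of the supremum metric. -/
abbrev PMap (n : ℕ) := ↥(oS n) →ᵤ ↥(cS n)

instance {n : ℕ} : MeasurableSpace (PMap n) := borel _

instance {n : ℕ} : BorelSpace (PMap n) := ⟨rfl⟩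

def stepReturn {n : ℕ} (μ : ℕ → ↥(oS n)) (t : ℕ) (w : Fin n → ℝ) : ℝ :=
  ∑ i, w i * ((μ (t + 1) : Fin n → ℝ) i / (μ t : Fin n → ℝ) i)

section Wealth

variable {n : ℕ} {M : ℝ} {μ : ℕ → ↥(oS n)}

lemma pV_succ (π : ↥(oS n) → ↥(cS n)) (t : ℕ) :
    pV μ π (t + 1) = pV μ π t * stepReturn μ t (π (μ t)) := rfl

lemma stepReturn_mem_Icc (hAM : AssumptionM M μ) (t : ℕ) (w : ↥(cS n)) :
    stepReturn μ t w ∈ Set.Icc (1 / M) M := by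
  obtain ⟨hw0, hw1⟩ := w.2
  constructor
  · calc 1 / M = ∑ i, (w : Fin n → ℝ) i * (1 / M) := by rw [← Finset.sum_mul, hw1, one_mul]
      _ ≤ stepReturn μ t w :=
        Finset.sum_le_sum fun i _ => mul_le_mul_of_nonneg_left (hAM t i).1 (hw0 i)
  · calc stepReturn μ t w ≤ ∑ i, (w : Fin n → ℝ) i * M :=
          Finset.sum_le_sum fun i _ => mul_le_mul_of_nonneg_left (hAM t i).2 (hw0 i)
      _ = M := by rw [← Finset.sum_mul, hw1, one_mul]

lemma stepReturn_le_add (hAM : AssumptionM M μ) (t : ℕ) (w w' : Fin n → ℝ) :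
    stepReturn μ t w ≤ stepReturn μ t w' + n * M * dist w w' := by
  have hsub : stepReturn μ t w - stepReturn μ t w' =
      ∑ i, (w i - w' i) * ((μ (t + 1) : Fin n → ℝ) i / (μ t : Fin n → ℝ) i) := by
    simp only [stepReturn, ← Finset.sum_sub_distrib, sub_mul]
  have hterm : ∀ i, (w i - w' i) * ((μ (t + 1) : Fin n → ℝ) i / (μ t : Fin n → ℝ) i) ≤
      dist w w' * M := fun i =>
    have hratio : 0 ≤ (μ (t + 1) : Fin n → ℝ) i / (μ t : Fin n → ℝ) i :=
      div_nonneg ((μ (t + 1)).2.1 i).le ((μ t).2.1 i).le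
    calc _ ≤ |w i - w' i| * ((μ (t + 1) : Fin n → ℝ) i / (μ t : Fin n → ℝ) i) :=
          mul_le_mul_of_nonneg_right (le_abs_self _) hratio
      _ ≤ dist w w' * M :=
          mul_le_mul (Real.dist_eq (w i) (w' i) ▸ dist_le_pi_dist w w' i) (hAM t i).2 hratio
            dist_nonneg
  have := Finset.sum_le_sum fun i (_ : i ∈ Finset.univ) => hterm i
  simp only [Finset.sum_const, Finset.card_univ, Fintype.card_fin, nsmul_eq_mul] at this
  linarith

lemma pV_mem_Icc (hM : 0 < M) (hAM : AssumptionM M μ) (π : ↥(oS n) → ↥(cS n)) (t : ℕ) :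
    pV μ π t ∈ Set.Icc ((1 / M) ^ t) (M ^ t) := by
  induction t with
  | zero => simp [pV, relV]
  | succ t ih =>
    obtain ⟨hlo, hhi⟩ := stepReturn_mem_Icc hAM t (π (μ t))
    rw [pV_succ, pow_succ, pow_succ]
    exact ⟨mul_le_mul ih.1 hlo (by positivity) ((pow_nonneg (by positivity) t).trans ih.1),
      mul_le_mul ih.2 hhi ((by positivity : (0 : ℝ) ≤ 1 / M).trans hlo) (by positivity)⟩

lemma pV_pos (hM : 0 < M) (hAM : AssumptionM M μ) (π : ↥(oS n) → ↥(cS n)) (t : ℕ) :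
    0 < pV μ π t :=
  (by positivity : (0 : ℝ) < (1 / M) ^ t).trans_le (pV_mem_Icc hM hAM π t).1

lemma pow_mul_pV_le_pV (hM : 0 < M) (hAM : AssumptionM M μ) {ρ ε : ℝ} (hρ : 0 ≤ ρ)
    (hε : n * M ^ 2 * ε ≤ 1 - ρ) {π π' : ↥(oS n) → ↥(cS n)} (h : ∀ p, dist (π p) (π' p) ≤ ε)
    (t : ℕ) : ρ ^ t * pV μ π t ≤ pV μ π' t := by
  induction t with
  | zero => simp [pV, relV]
  | succ t ih =>
    set S := stepReturn μ t (π (μ t))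
    have hS : 1 / M ≤ S := (stepReturn_mem_Icc hAM t (π (μ t))).1
    have hε0 : 0 ≤ ε := dist_nonneg.trans (h (μ t))
    have hstep : ρ * S ≤ stepReturn μ t (π' (μ t)) := by
      have hclose := stepReturn_le_add hAM t (π (μ t)) (π' (μ t))
      have hloss : n * M * ε ≤ (1 - ρ) * S :=
        calc n * M * ε = n * M ^ 2 * ε * (1 / M) := by field_simp
          _ ≤ (1 - ρ) * S := mul_le_mul hε hS (by positivity)
            ((by positivity : (0 : ℝ) ≤ n * M ^ 2 * ε).trans hε)
      have : (n : ℝ) * M * dist (π (μ t) : Fin n → ℝ) (π' (μ t)) ≤ n * M * ε := by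
        gcongr; exact h (μ t)
      linarith
    rw [pV_succ, pV_succ, pow_succ]
    calc ρ ^ t * ρ * (pV μ π t * S) = (ρ ^ t * pV μ π t) * (ρ * S) := by ring
      _ ≤ _ := mul_le_mul ih hstep (mul_nonneg hρ ((by positivity : (0 : ℝ) ≤ 1 / M).trans hS))
          (pV_pos hM hAM π' t).le

end Wealth

lemma measurable_pV {n : ℕ} (μ : ℕ → ↥(oS n)) {Θ : Set (PMap n)}
    (hmeas : Measurable fun pc : ↥(oS n) × ↥Θ => UniformFun.toFun pc.2.1 pc.1) (t : ℕ) :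
    Measurable fun θ : ↥Θ => pV μ (UniformFun.toFun θ.1) t := by
  induction t with
  | zero => exact measurable_const
  | succ t ih =>
    have hθ : Measurable fun θ : ↥Θ => ((UniformFun.toFun θ.1 (μ t) : ↥(cS n)) : Fin n → ℝ) :=
      measurable_subtype_coe.comp (hmeas.comp (measurable_const.prodMk measurable_id))
    exact ih.mul (Finset.measurable_sum _ fun i _ => ((measurable_pi_apply i).comp hθ).mul_const _)

lemma exists_pos_forall_exists_subset_ball_le_measure {X : Type*} [UniformSpace X]
    [MeasurableSpace X] [OpensMeasurableSpace X] (hX : TotallyBounded (Set.univ : Set X))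
    (ν : Measure X) (hsupp : ∀ U : Set X, IsOpen U → U.Nonempty → 0 < ν U)
    {U : SetRel X X} (hU : U ∈ 𝓤 X) :
    ∃ c > 0, ∀ x, ∃ A ⊆ UniformSpace.ball x U, MeasurableSet A ∧ c ≤ ν A := by
  obtain ⟨V, hV, hVopen, hVsymm, hVU⟩ := comp_open_symm_mem_uniformity_sets hU
  obtain ⟨F, hF, hcover⟩ := hX V hV
  set B : X → Set X := fun y => {z | (z, y) ∈ V}
  have hBopen : ∀ y, IsOpen (B y) := fun y => hVopen.preimage (by fun_prop)
  refine ⟨hF.toFinset.inf fun y => ν (B y), ?_, fun x => ?_⟩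
  · refine (Finset.lt_inf_iff ENNReal.zero_lt_top).2 fun y _ => hsupp _ (hBopen y) ⟨y, ?_⟩
    exact refl_mem_uniformity hV
  · obtain ⟨y, hy, hxy⟩ := Set.mem_iUnion₂.1 (hcover (Set.mem_univ x))
    refine ⟨B y, fun z hz => hVU ⟨y, hxy, SetRel.symm V hz⟩, (hBopen y).measurableSet,
      Finset.inf_le (hF.mem_toFinset.2 hy)⟩

lemma tendsto_log_div_atTop_of_const_mul_pow_le {a : ℕ → ℝ} (ha : ∀ t, a t ≤ 1)
    (h : ∀ ρ : ℝ, 0 < ρ → ρ < 1 → ∃ C > 0, ∀ t, C * ρ ^ t ≤ a t) :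
    Tendsto (fun t : ℕ => Real.log (a t) / t) atTop (𝓝 0) := by
  obtain ⟨C₀, hC₀, ha₀⟩ := h (1 / 2) (by norm_num) (by norm_num)
  have hpos : ∀ t, 0 < a t := fun t => (by positivity : 0 < C₀ * (1 / 2) ^ t).trans_le (ha₀ t)
  refine tendsto_order.2 ⟨fun b hb => ?_, fun b hb => Eventually.of_forall fun t =>
    (div_nonpos_of_nonpos_of_nonneg (Real.log_nonpos (hpos t).le (ha t)) t.cast_nonneg).trans_lt hb⟩
  obtain ⟨C, hC, hCa⟩ := h (Real.exp (b / 2)) (Real.exp_pos _) (Real.exp_lt_one_iff.2 (by linarith))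
  have hlim : Tendsto (fun t : ℕ => Real.log C / t) atTop (𝓝 0) :=
    tendsto_const_div_atTop_nhds_zero_nat _
  filter_upwards [hlim.eventually (eventually_gt_nhds (by linarith : b / 2 < 0)),
    eventually_gt_atTop 0] with t hCt ht
  have htpos : (0 : ℝ) < t := Nat.cast_pos.2 ht
  have hlog : Real.log C + t * (b / 2) ≤ Real.log (a t) := by
    have := Real.log_le_log (by positivity) (hCa t)
    rwa [Real.log_mul hC.ne' (by positivity), Real.log_pow, Real.log_exp] at this
  rw [lt_div_iff₀ htpos] at hCt ⊢
  linarith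

section Universality

variable {n : ℕ} {M : ℝ} {μ : ℕ → ↥(oS n)} {Θ : Set (PMap n)}

lemma bddAbove_range_pV (hM : 0 < M) (hAM : AssumptionM M μ) (t : ℕ) :
    BddAbove (Set.range fun θ : ↥Θ => pV μ (UniformFun.toFun θ.1) t) :=
  ⟨M ^ t, by rintro _ ⟨θ, rfl⟩; exact (pV_mem_Icc hM hAM _ t).2⟩

lemma integrable_pV (hM : 0 < M) (hAM : AssumptionM M μ)
    (hmeas : Measurable fun pc : ↥(oS n) × ↥Θ => UniformFun.toFun pc.2.1 pc.1)
    (ν0 : Measure ↥Θ) [IsFiniteMeasure ν0] (t : ℕ) :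
    Integrable (fun θ : ↥Θ => pV μ (UniformFun.toFun θ.1) t) ν0 :=
  (integrable_const (M ^ t)).mono' (measurable_pV μ hmeas t).aestronglyMeasurable
    (ae_of_all _ fun _ => by
      rw [Real.norm_eq_abs, abs_of_pos (pV_pos hM hAM _ t)]
      exact (pV_mem_Icc hM hAM _ t).2)

lemma exists_pos_mul_pow_mul_iSup_pV_le_integral (hM : 0 < M) (hAM : AssumptionM M μ)
    (hTB : TotallyBounded Θ)
    (hmeas : Measurable fun pc : ↥(oS n) × ↥Θ => UniformFun.toFun pc.2.1 pc.1)
    (ν0 : Measure ↥Θ) [IsFiniteMeasure ν0] [Nonempty ↥Θ]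
    (hsupp : ∀ U : Set ↥Θ, IsOpen U → U.Nonempty → 0 < ν0 U) {ρ : ℝ} (hρ0 : 0 < ρ)
    (hρ1 : ρ < 1) :
    ∃ C > 0, ∀ t, C * ρ ^ t * (⨆ θ : ↥Θ, pV μ (UniformFun.toFun θ.1) t) ≤
      ∫ θ : ↥Θ, pV μ (UniformFun.toFun θ.1) t ∂ν0 := by
  obtain ⟨ε, hε, hερ⟩ := exists_pos_mul_lt (sub_pos.2 hρ1) (n * M ^ 2)
  have hU : (fun q : ↥Θ × ↥Θ => (q.1.1, q.2.1)) ⁻¹'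
      UniformFun.gen (↥(oS n)) (↥(cS n)) {q | dist q.1 q.2 < ε} ∈ 𝓤 ↥Θ :=
    uniformContinuous_subtype_val
      ((UniformFun.hasBasis_uniformity _ _).mem_of_mem (Metric.dist_mem_uniformity hε))
  have hTB' : TotallyBounded (Set.univ : Set ↥Θ) := by
    rw [← Subtype.coe_preimage_self]
    exact totallyBounded_preimage isUniformEmbedding_subtype_val.isUniformInducing hTB
  obtain ⟨c, hc, hcA⟩ := exists_pos_forall_exists_subset_ball_le_measure hTB' ν0 hsupp hU
  have hc_top : c ≠ ⊤ := by
    obtain ⟨A, -, -, hA⟩ := hcA (Classical.arbitrary _)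
    exact ne_top_of_le_ne_top (measure_ne_top ν0 A) hA
  refine ⟨c.toReal, ENNReal.toReal_pos hc.ne' hc_top, fun t => ?_⟩
  rw [Real.mul_iSup_of_nonneg (by positivity)]
  refine ciSup_le fun θ => ?_
  obtain ⟨A, hAball, hAmeas, hcA⟩ := hcA θ
  have hA : ∀ θ' ∈ A, ρ ^ t * pV μ (UniformFun.toFun θ.1) t ≤ pV μ (UniformFun.toFun θ'.1) t :=
    fun θ' hθ' => pow_mul_pV_le_pV hM hAM hρ0.le hερ.le (fun p => (hAball hθ' p).le) t
  have hint := integrable_pV hM hAM hmeas ν0 t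
  calc c.toReal * ρ ^ t * pV μ (UniformFun.toFun θ.1) t
      = ρ ^ t * pV μ (UniformFun.toFun θ.1) t * c.toReal := by ring
    _ ≤ ρ ^ t * pV μ (UniformFun.toFun θ.1) t * ν0.real A :=
        mul_le_mul_of_nonneg_left (ENNReal.toReal_mono (measure_ne_top ν0 A) hcA)
          (mul_nonneg (by positivity) (pV_pos hM hAM _ t).le)
    _ ≤ ∫ θ' in A, pV μ (UniformFun.toFun θ'.1) t ∂ν0 :=
        setIntegral_ge_of_const_le_real hAmeas (measure_ne_top ν0 A) hA hint.integrableOn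
    _ ≤ ∫ θ', pV μ (UniformFun.toFun θ'.1) t ∂ν0 :=
        setIntegral_le_integral hint (ae_of_all _ fun θ' => (pV_pos hM hAM _ t).le)

end Universality

theorem stmt9_general {n : ℕ} (M : ℝ) (hM : 0 < M)
    (μ : ℕ → ↥(oS n)) (hAM : AssumptionM M μ)
    (Θ : Set (PMap n)) (hTB : TotallyBounded Θ)
    (hmeas : Measurable fun pc : ↥(oS n) × ↥Θ => UniformFun.toFun pc.2.1 pc.1)
    (ν0 : Measure ↥Θ) [IsProbabilityMeasure ν0]
    (hsupp : ∀ U : Set ↥Θ, IsOpen U → U.Nonempty → 0 < ν0 U) :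
    Tendsto (fun t : ℕ =>
        Real.log ((∫ θ : ↥Θ, pV μ (UniformFun.toFun θ.1) t ∂ν0) /
          (⨆ θ : ↥Θ, pV μ (UniformFun.toFun θ.1) t)) / t)
      atTop (𝓝 0) := by
  have := nonempty_of_isProbabilityMeasure ν0
  have hsup_pos : ∀ t, 0 < ⨆ θ : ↥Θ, pV μ (UniformFun.toFun θ.1) t := fun t =>
    (pV_pos hM hAM _ t).trans_le (le_ciSup (bddAbove_range_pV hM hAM t) (Classical.arbitrary _))
  have hint_le_sup : ∀ t, ∫ θ : ↥Θ, pV μ (UniformFun.toFun θ.1) t ∂ν0 ≤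
      ⨆ θ : ↥Θ, pV μ (UniformFun.toFun θ.1) t := fun t => by
    simpa using integral_mono (integrable_pV hM hAM hmeas ν0 t) (integrable_const _)
      fun θ => le_ciSup (bddAbove_range_pV hM hAM t) θ
  refine tendsto_log_div_atTop_of_const_mul_pow_le
    (fun t => (div_le_one (hsup_pos t)).2 (hint_le_sup t)) fun ρ hρ0 hρ1 => ?_
  obtain ⟨C, hC, hCV⟩ :=
    exists_pos_mul_pow_mul_iSup_pV_le_integral hM hAM hTB hmeas ν0 hsupp hρ0 hρ1
  exact ⟨C, hC, fun t => (le_div_iff₀ (hsup_pos t)).2 (hCV t)⟩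

/-- Lemma 3.5: universality of Cover's portfolio for a totally bounded
family of portfolio maps: `(1/t) log (V̂(t)/V*(t)) → 0`, where
`V̂(t) = ∫_Θ V_π(t) dν₀(π)` and `V*(t) = sup_{π ∈ Θ} V_π(t)`. -/
theorem stmt9 {n : ℕ} (hn : 2 ≤ n) (M : ℝ) (hM : 0 < M)
    (μ : ℕ → ↥(oS n)) (hAM : AssumptionM M μ)
    (Θ : Set (PMap n)) (hTB : TotallyBounded Θ)
    (hmeas : Measurable fun pc : ↥(oS n) × ↥Θ => UniformFun.toFun pc.2.1 pc.1)
    (ν0 : Measure ↥Θ) [IsProbabilityMeasure ν0]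
    (hsupp : ∀ U : Set ↥Θ, IsOpen U → U.Nonempty → 0 < ν0 U) :
    Tendsto (fun t : ℕ =>
        Real.log ((∫ θ : ↥Θ, pV μ (UniformFun.toFun θ.1) t ∂ν0) /
          (⨆ θ : ↥Θ, pV μ (UniformFun.toFun θ.1) t)) / t)
      atTop (𝓝 0) :=
  stmt9_general M hM μ hAM Θ hTB hmeas ν0 hsupp
end
end
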